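/- Let H be a Hopf algebra with bijective antipode S and let B be a left coideal subalgebra. Then S⁻¹(B⁺)H = B⁺H as subspaces of H, and consequently the composite π ∘ S⁻¹ ∘ ι : B → H/B⁺H is trivial, i.e. π(S⁻¹(ι(b))) = ε(b)·π(1) for all b ∈ B. -/

import Mathlib

/-!
Write `Δ b = ∑ b₁ ⊗ b₂` with all `b₂ ∈ B`. Since `S` is injective and antimultiplicative, applying
it to `∑ S⁻¹(b₂) b₁` and `∑ b₂ S⁻¹(b₁)` turns them into the two sides of the antipode axiom, so both
equal `ε(b)`. Hence `S⁻¹(b) - ε(b) = -∑ (b₂ - ε(b₂)) S⁻¹(b₁)` lies in `B⁺H`, and for `b ∈ B⁺`,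
`b = -∑ S⁻¹(b₂ - ε(b₂)) b₁` lies in `S⁻¹(B⁺)H`. Both subspaces are closed under right
multiplication, so each contains the generators of the other.
-/

open TensorProduct HopfAlgebra

lemma Coalgebra.Repr.sum_counit_right_smul {k C M : Type*} [CommSemiring k] [AddCommMonoid C]
    [Module k C] [Coalgebra k C] [AddCommMonoid M] [Module k M] (f : C →ₗ[k] M) {ι : Type*}
    {a : C} (r : Coalgebra.Repr k a ι) :
    ∑ i ∈ r.index, Coalgebra.counit (R := k) (r.right i) • f (r.left i) = f a := by
  simpa only [map_sum, _root_.TensorProduct.rid_tmul, one_smul] using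
    congrArg (_root_.TensorProduct.rid k M)
      (Coalgebra.sum_map_tmul_counit_eq (R := k) f a (repr := r))

section AntipodeInverse

variable {k H : Type*} [CommRing k] [Ring H] [HopfAlgebra k H] {Sinv : H →ₗ[k] H}

lemma antipode_injective_of_leftInverse (hS₁ : Sinv ∘ₗ antipode k = LinearMap.id) :
    Function.Injective (antipode k (A := H)) :=
  Function.LeftInverse.injective (g := Sinv) (LinearMap.congr_fun hS₁)

lemma map_one_of_leftInverse_antipode (hS₁ : Sinv ∘ₗ antipode k = LinearMap.id) :
    Sinv 1 = 1 := by
  simpa using LinearMap.congr_fun hS₁ 1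

variable (hS₁ : Sinv ∘ₗ antipode k = LinearMap.id) (hS₂ : antipode k ∘ₗ Sinv = LinearMap.id)
include hS₁ hS₂

omit hS₁ in
lemma antipode_apply_antipodeInv (x : H) : antipode k (Sinv x) = x :=
  LinearMap.congr_fun hS₂ x

lemma sum_antipodeInv_right_mul_left {ι : Type*} {a : H} (r : Coalgebra.Repr k a ι) :
    ∑ i ∈ r.index, Sinv (r.right i) * r.left i = Coalgebra.counit (R := k) a • 1 := by
  apply antipode_injective_of_leftInverse hS₁
  simp only [map_sum, map_smul, antipode_one, antipode_mul_antidistrib,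
    antipode_apply_antipodeInv hS₂]
  exact sum_antipode_mul_eq_smul r

lemma sum_right_mul_antipodeInv_left {ι : Type*} {a : H} (r : Coalgebra.Repr k a ι) :
    ∑ i ∈ r.index, r.right i * Sinv (r.left i) = Coalgebra.counit (R := k) a • 1 := by
  apply antipode_injective_of_leftInverse hS₁
  simp only [map_sum, map_smul, antipode_one, antipode_mul_antidistrib,
    antipode_apply_antipodeInv hS₂]
  exact sum_mul_antipode_eq_smul r

end AntipodeInverse

section CoidealSubalgebra

variable {k H : Type*} [CommRing k] [Ring H] [HopfAlgebra k H] (B : Subalgebra k H)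

def Subalgebra.IsLeftCoideal : Prop :=
  ∀ b : B, Coalgebra.comul (b : H) ∈
    LinearMap.range (TensorProduct.map (LinearMap.id : H →ₗ[k] H) B.val.toLinearMap)

/-- The subspace `f(B⁺)H`; for `f = id` it is `B⁺H`. -/
def augRightSpan (f : H → H) : Submodule k H :=
  Submodule.span k {z : H | ∃ b ∈ B, ∃ h : H, Coalgebra.counit (R := k) b = 0 ∧ z = f b * h}

variable {B}

lemma mul_mem_augRightSpan {f : H → H} {x : H} (hx : x ∈ augRightSpan B f) (h : H) :
    x * h ∈ augRightSpan B f := by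
  induction hx using Submodule.span_induction with
  | mem x hx =>
    obtain ⟨b, hb, h', hε, rfl⟩ := hx
    exact Submodule.subset_span ⟨b, hb, h' * h, hε, mul_assoc _ _ _⟩
  | zero => simp
  | add x y _ _ ihx ihy => simpa only [add_mul] using add_mem ihx ihy
  | smul c x _ ih => simpa only [smul_mul_assoc] using Submodule.smul_mem _ c ih

lemma augRightSpan_le_augRightSpan {f g : H → H}
    (hfg : ∀ b ∈ B, Coalgebra.counit (R := k) b = 0 → f b ∈ augRightSpan B g) :
    augRightSpan B f ≤ augRightSpan B g := by
  rw [augRightSpan, Submodule.span_le]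
  rintro _ ⟨b, hb, h, hε, rfl⟩
  exact mul_mem_augRightSpan (hfg b hb hε) h

lemma mul_mem_augRightSpan_of_mem {f : H → H} {b : H} (hb : b ∈ B)
    (hε : Coalgebra.counit (R := k) b = 0) (h : H) : f b * h ∈ augRightSpan B f :=
  Submodule.subset_span ⟨b, hb, h, hε, rfl⟩

lemma counit_sub_counit_smul_one (x : H) :
    Coalgebra.counit (R := k) (x - Coalgebra.counit (R := k) x • 1) = 0 := by
  simp

lemma sub_counit_smul_one_mem {b : H} (hb : b ∈ B) :
    b - Coalgebra.counit (R := k) b • 1 ∈ B :=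
  B.sub_mem hb (B.smul_mem B.one_mem _)

lemma Subalgebra.IsLeftCoideal.exists_repr (hB : B.IsLeftCoideal) {b : H} (hb : b ∈ B) :
    ∃ r : Coalgebra.Repr k b (H × B), ∀ i, r.right i ∈ B := by
  obtain ⟨t, ht⟩ := hB ⟨b, hb⟩
  obtain ⟨s, rfl⟩ := TensorProduct.exists_finset t
  refine ⟨⟨s, Prod.fst, fun p => p.2, ?_⟩, fun p => p.2.2⟩
  simp [← ht]

end CoidealSubalgebra

section

variable {k H : Type*} [CommRing k] [Ring H] [HopfAlgebra k H] {B : Subalgebra k H}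
  (hB : B.IsLeftCoideal) {Sinv : H →ₗ[k] H}
  (hS₁ : Sinv ∘ₗ antipode k = LinearMap.id) (hS₂ : antipode k ∘ₗ Sinv = LinearMap.id)
include hB hS₁ hS₂

lemma antipodeInv_sub_counit_smul_one_mem {b : H} (hb : b ∈ B) :
    Sinv b - Coalgebra.counit (R := k) b • 1 ∈ augRightSpan B id := by
  obtain ⟨r, hr⟩ := hB.exists_repr hb
  have hsum : ∑ i ∈ r.index,
      (r.right i - Coalgebra.counit (R := k) (r.right i) • 1) * Sinv (r.left i) =
        Coalgebra.counit (R := k) b • 1 - Sinv b := by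
    simp only [sub_mul, smul_mul_assoc, one_mul, Finset.sum_sub_distrib,
      sum_right_mul_antipodeInv_left hS₁ hS₂ r, r.sum_counit_right_smul Sinv]
  rw [← neg_sub, ← hsum, ← Submodule.neg_mem_iff, neg_neg]
  exact Submodule.sum_mem _ fun i _ =>
    mul_mem_augRightSpan_of_mem (sub_counit_smul_one_mem (hr i)) (counit_sub_counit_smul_one _) _

lemma mem_augRightSpan_antipodeInv {b : H} (hb : b ∈ B) (hε : Coalgebra.counit (R := k) b = 0) :
    b ∈ augRightSpan B Sinv := by
  obtain ⟨r, hr⟩ := hB.exists_repr hb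
  have hsum : ∑ i ∈ r.index,
      Sinv (r.right i - Coalgebra.counit (R := k) (r.right i) • 1) * r.left i = -b := by
    simp only [map_sub, map_smul, map_one_of_leftInverse_antipode hS₁, sub_mul, smul_mul_assoc,
      one_mul, Finset.sum_sub_distrib, sum_antipodeInv_right_mul_left hS₁ hS₂ r, hε, zero_smul,
      zero_sub]
    exact congrArg Neg.neg (r.sum_counit_right_smul LinearMap.id)
  rw [← neg_neg b, ← hsum, Submodule.neg_mem_iff]
  exact Submodule.sum_mem _ fun i _ =>
    mul_mem_augRightSpan_of_mem (sub_counit_smul_one_mem (hr i)) (counit_sub_counit_smul_one _) _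

end

theorem stmt9 {k H : Type*} [Field k] [Ring H] [HopfAlgebra k H]
    (B : Subalgebra k H)
    -- B is a left coideal subalgebra: Δ(B) ⊆ H ⊗ B
    (hB : ∀ b : B, Coalgebra.comul (b : H) ∈
      LinearMap.range (TensorProduct.map (LinearMap.id : H →ₗ[k] H) B.val.toLinearMap))
    -- the antipode is bijective, with inverse Sinv
    (Sinv : H →ₗ[k] H)
    (hS₁ : Sinv ∘ₗ HopfAlgebra.antipode (R := k) = LinearMap.id)
    (hS₂ : HopfAlgebra.antipode (R := k) ∘ₗ Sinv = LinearMap.id) :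
    -- S⁻¹(B⁺)H = B⁺H
    Submodule.span k
        {z : H | ∃ b ∈ B, ∃ h : H, Coalgebra.counit (R := k) b = 0 ∧ z = Sinv b * h}
      = Submodule.span k
        {z : H | ∃ b ∈ B, ∃ h : H, Coalgebra.counit (R := k) b = 0 ∧ z = b * h} ∧
    -- π ∘ S⁻¹ ∘ ι is trivial: π(S⁻¹(ι(b))) = ε(b)·π(1)
    ∀ b : B,
      (Submodule.span k
        {z : H | ∃ b ∈ B, ∃ h : H, Coalgebra.counit (R := k) b = 0 ∧ z = b * h}).mkQ
          (Sinv (b : H))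
      = Coalgebra.counit (R := k) (b : H) •
        (Submodule.span k
          {z : H | ∃ b ∈ B, ∃ h : H, Coalgebra.counit (R := k) b = 0 ∧ z = b * h}).mkQ 1 := by
  have hle : augRightSpan B Sinv ≤ augRightSpan B id :=
    augRightSpan_le_augRightSpan fun b hb hε => by
      simpa [hε] using antipodeInv_sub_counit_smul_one_mem hB hS₁ hS₂ hb
  have hge : augRightSpan B id ≤ augRightSpan B Sinv :=
    augRightSpan_le_augRightSpan fun b hb hε => mem_augRightSpan_antipodeInv hB hS₁ hS₂ hb hε
  refine ⟨le_antisymm hle hge, fun b => ?_⟩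
  rw [← sub_eq_zero, ← map_smul, ← map_sub, Submodule.mkQ_apply, Submodule.Quotient.mk_eq_zero]
  exact antipodeInv_sub_counit_smul_one_mem hB hS₁ hS₂ b.2
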